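/- arXiv:1409.4156 — 3 statements merged into one kernel-verified Lean document; each statement's English description precedes it below -/
import Mathlib

section
/- Compatibility of generalized preimages with composition: Let f : S → T and g : T → U be N-maps of truncation posets. For a subset (or element) u of U, define ĝ⁻¹(u) as the set of minimal elements t ∈ T with u | g(t), and similarly for f. Then for every u ∈ U, the set of minimal elements s ∈ S with u | (g∘f)(s) equals the union over t ∈ ĝ⁻¹(u) of the minimal elements s with t | f(s); that is, (g∘f)^{-hat}(u) = f^{-hat}(ĝ⁻¹(u)). -/
/-!
Below any element `x` of a truncation poset, elements are determined by their norms and ordered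
by divisibility of norms, and a map of truncation posets multiplies norms below `x` by the norm
of the image of the root `i ≤ x`. Hence two elements `t, t' ≤ x` with `u ≤ g t` and `u ≤ g t'`
have a common lower bound of norm `gcd (ν t) (ν t')` which still lies over `u`, so there is at
most one minimal element over `u` below `x`, and it exists because the set below `x` is finite.
With this, `s` is minimal over `u` for `g ∘ f` exactly when it is minimal over the unique
minimal `t ≤ f s` over `u`.
-/

namespace TP

def IsTPNorm {S : Type*} [PartialOrder S] (ν : S → ℕ) : Prop :=
  (∀ s, 0 < ν s) ∧
  (∀ s t : S, s ≤ t → ν s ∣ ν t) ∧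
  (∀ s t u : S, s ≤ t → t ≤ u → ν u / ν s = (ν u / ν t) * (ν t / ν s)) ∧
  (∀ (s : S) (d : ℕ), d ∣ ν s → ∃! t : S, t ≤ s ∧ ν t = ν s / d) ∧
  (∀ s t t' : S, s ≤ t → s ≤ t' → ν t = ν t' → t = t')

def IsTPMap {S T : Type*} [PartialOrder S] [PartialOrder T] (νS : S → ℕ) (νT : T → ℕ)
    (f : S → T) : Prop :=
  ∀ s₁ s₂ : S, s₁ ≤ s₂ → f s₁ ≤ f s₂ ∧ νT (f s₂) / νT (f s₁) = νS s₂ / νS s₁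

def IsFibration {S T : Type*} [PartialOrder S] [PartialOrder T] (f : S → T) : Prop :=
  ∀ (s : S) (t' : T), f s ≤ t' → ∃ s', s ≤ s' ∧ f s' = t'

def IsTMap {S T : Type*} [PartialOrder S] [PartialOrder T] (νS : S → ℕ) (νT : T → ℕ)
    (f : S → T) : Prop :=
  IsTPMap νS νT f ∧ IsFibration f ∧ ∀ t : T, (f ⁻¹' {t}).Finite

def SameComp {S : Type*} [PartialOrder S] (ν : S → ℕ) (a b : S) : Prop :=
  ∃ i : S, ν i = 1 ∧ i ≤ a ∧ i ≤ b

def hatPreim {S T : Type*} [PartialOrder S] [PartialOrder T] (f : S → T) (t : T) : Set S :=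
  {s | t ≤ f s ∧ ∀ s', s' ≤ s → t ≤ f s' → s' = s}

def IsNMap {S T : Type*} [PartialOrder S] [PartialOrder T] (νS : S → ℕ) (νT : T → ℕ)
    (f : S → T) : Prop :=
  IsTPMap νS νT f ∧
  (∀ (s : S) (t' : T), SameComp νT (f s) t' → ∃ s', SameComp νS s s' ∧ t' ≤ f s') ∧
  ∀ t : T, (hatPreim f t).Finite

noncomputable def ghost {S : Type*} [PartialOrder S] (ν : S → ℕ) {k : Type*} [CommRing k]
    (a : S → k) : S → k :=
  fun s => ∑ᶠ t ∈ {t : S | t ≤ s}, (ν t : k) * a t ^ (ν s / ν t)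

end TP

namespace TP

namespace IsTPNorm

variable {S : Type*} [PartialOrder S] {ν : S → ℕ}

theorem exists_le_norm_eq (h : IsTPNorm ν) {s : S} {m : ℕ} (hm : m ∣ ν s) :
    ∃ t ≤ s, ν t = m := by
  obtain ⟨t, ⟨hts, ht⟩, -⟩ := h.2.2.2.1 s (ν s / m) (Nat.div_dvd_of_dvd hm)
  exact ⟨t, hts, by rw [ht, Nat.div_div_self hm (h.1 s).ne']⟩

theorem eq_of_le_of_norm_eq (h : IsTPNorm ν) {s t₁ t₂ : S} (h₁ : t₁ ≤ s) (h₂ : t₂ ≤ s)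
    (he : ν t₁ = ν t₂) : t₁ = t₂ := by
  have hd : ν t₁ ∣ ν s := h.2.1 _ _ h₁
  have hquot : ν s / (ν s / ν t₁) = ν t₁ := Nat.div_div_self hd (h.1 s).ne'
  exact (h.2.2.2.1 s (ν s / ν t₁) (Nat.div_dvd_of_dvd hd)).unique
    ⟨h₁, hquot.symm⟩ ⟨h₂, by rw [hquot, he]⟩

theorem le_of_dvd (h : IsTPNorm ν) {s t₁ t₂ : S} (h₁ : t₁ ≤ s) (h₂ : t₂ ≤ s)
    (hd : ν t₁ ∣ ν t₂) : t₁ ≤ t₂ := by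
  obtain ⟨r, hr, hνr⟩ := h.exists_le_norm_eq hd
  exact h.eq_of_le_of_norm_eq (hr.trans h₂) h₁ hνr ▸ hr

theorem exists_root_le (h : IsTPNorm ν) (s : S) : ∃ i ≤ s, ν i = 1 :=
  h.exists_le_norm_eq (one_dvd _)

theorem finite_Iic (h : IsTPNorm ν) (s : S) : (Set.Iic s).Finite := by
  refine Set.Finite.of_finite_image (f := ν) ((Set.finite_Icc 1 (ν s)).subset ?_)
    fun _ ha _ hb hab => h.eq_of_le_of_norm_eq ha hb hab
  rintro _ ⟨t, ht, rfl⟩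
  exact ⟨h.1 t, Nat.le_of_dvd (h.1 s) (h.2.1 _ _ ht)⟩

end IsTPNorm

section Maps

variable {S T U : Type*} [PartialOrder S] [PartialOrder T] [PartialOrder U]
  {νT : T → ℕ} {νU : U → ℕ}

theorem IsTPMap.monotone {νS : S → ℕ} {f : S → T} (hf : IsTPMap νS νT f) : Monotone f :=
  fun _ _ h => (hf _ _ h).1

theorem IsTPMap.norm_map_eq_mul (hU : IsTPNorm νU) {g : T → U} (hg : IsTPMap νT νU g)
    {i t : T} (hit : i ≤ t) (hi : νT i = 1) : νU (g t) = νU (g i) * νT t := by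
  obtain ⟨hle, hquot⟩ := hg i t hit
  rw [hi, Nat.div_one] at hquot
  rw [← hquot, Nat.mul_div_cancel' (hU.2.1 _ _ hle)]

theorem exists_mem_hatPreim_le (hT : IsTPNorm νT) (g : T → U) {u : U} {t₀ : T}
    (h₀ : u ≤ g t₀) : ∃ t ≤ t₀, t ∈ hatPreim g u := by
  obtain ⟨t, -, ⟨ht₀, hut⟩, hmin⟩ :=
    ((hT.finite_Iic t₀).inter_of_left {t | u ≤ g t}).isPWO.exists_le_minimal
      (show t₀ ∈ Set.Iic t₀ ∩ {t | u ≤ g t} from ⟨le_rfl, h₀⟩)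
  exact ⟨t, ht₀, hut, fun t' ht' hut' =>
    le_antisymm ht' (hmin ⟨ht'.trans ht₀, hut'⟩ ht')⟩

theorem subsingleton_hatPreim_inter_Iic (hT : IsTPNorm νT) (hU : IsTPNorm νU) {g : T → U}
    (hg : IsTPMap νT νU g) (u : U) (x : T) : (hatPreim g u ∩ Set.Iic x).Subsingleton := by
  rintro t ⟨⟨hut, htmin⟩, htx⟩ t' ⟨⟨hut', ht'min⟩, ht'x⟩
  obtain ⟨i, hix, hi⟩ := hT.exists_root_le x
  obtain ⟨w, hwx, hw⟩ := hT.exists_le_norm_eq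
    ((Nat.gcd_dvd_left _ _).trans (hT.2.1 _ _ htx) : Nat.gcd (νT t) (νT t') ∣ νT x)
  have below : ∀ {y}, y ≤ x → i ≤ y := fun hy => hT.le_of_dvd hix hy (hi ▸ one_dvd _)
  have hwt : w ≤ t := hT.le_of_dvd hwx htx (hw ▸ Nat.gcd_dvd_left _ _)
  have hwt' : w ≤ t' := hT.le_of_dvd hwx ht'x (hw ▸ Nat.gcd_dvd_right _ _)
  have hnorm : νU (g w) = Nat.gcd (νU (g t)) (νU (g t')) := by
    rw [hg.norm_map_eq_mul hU (below hwx) hi, hg.norm_map_eq_mul hU (below htx) hi,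
      hg.norm_map_eq_mul hU (below ht'x) hi, Nat.gcd_mul_left, hw]
  have huw : u ≤ g w :=
    hU.le_of_dvd (hut.trans (hg.monotone htx)) (hg.monotone hwx)
      (hnorm ▸ Nat.dvd_gcd (hU.2.1 _ _ hut) (hU.2.1 _ _ hut'))
  exact (htmin w hwt huw).symm.trans (ht'min w hwt' huw)

end Maps

end TP

theorem stmt8_general {S T U : Type*} [PartialOrder S] [PartialOrder T] [PartialOrder U]
    (νS : S → ℕ) (νT : T → ℕ) (νU : U → ℕ)
    (hT : TP.IsTPNorm νT) (hU : TP.IsTPNorm νU)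
    (f : S → T) (g : T → U) (hf : TP.IsNMap νS νT f) (hg : TP.IsNMap νT νU g) :
    ∀ u : U, TP.hatPreim (g ∘ f) u = ⋃ t ∈ TP.hatPreim g u, TP.hatPreim f t := by
  intro u
  ext s
  simp only [Set.mem_iUnion, exists_prop]
  constructor
  · rintro ⟨hus, hsmin⟩
    obtain ⟨t, htfs, ht⟩ := TP.exists_mem_hatPreim_le hT g hus
    exact ⟨t, ht, htfs, fun s' hs' hts' => hsmin s' hs' (ht.1.trans (hg.1.monotone hts'))⟩
  · rintro ⟨t, ht, htfs, hsmin⟩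
    refine ⟨ht.1.trans (hg.1.monotone htfs), fun s' hs' hus' => ?_⟩
    obtain ⟨t', ht'fs', ht'⟩ := TP.exists_mem_hatPreim_le hT g hus'
    have htt' : t = t' := TP.subsingleton_hatPreim_inter_Iic hT hU hg.1 u (f s)
      ⟨ht, htfs⟩ ⟨ht', ht'fs'.trans (hf.1.monotone hs')⟩
    exact hsmin s' hs' (htt' ▸ ht'fs')

/-- Compatibility of the generalized preimage with composition: for N-maps
`f : S → T` and `g : T → U`, the minimal elements over `u` for `g ∘ f` are exactly
the minimal elements for `f` over the minimal elements for `g` over `u`. -/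
theorem stmt8 {S T U : Type*} [PartialOrder S] [PartialOrder T] [PartialOrder U]
    (νS : S → ℕ) (νT : T → ℕ) (νU : U → ℕ)
    (hS : TP.IsTPNorm νS) (hT : TP.IsTPNorm νT) (hU : TP.IsTPNorm νU)
    (f : S → T) (g : T → U) (hf : TP.IsNMap νS νT f) (hg : TP.IsNMap νT νU g) :
    ∀ u : U, TP.hatPreim (g ∘ f) u = ⋃ t ∈ TP.hatPreim g u, TP.hatPreim f t :=
  stmt8_general νS νT νU hT hU f g hf hg
end

section
/- Divisibility structure of generalized preimages: Let f : S → T be an N-map of truncation posets. Given t, t' ∈ T with t | t' and s ∈ f^{-hat}(t) (i.e., s is minimal with t | f(s)), there is a unique s' ∈ f^{-hat}(t') with s | s'. Conversely, given s' ∈ f^{-hat}(t') there is a unique s ∈ f^{-hat}(t) with s | s'. -/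
/-!
Below any element of a truncation poset the order is divisibility of norms, and above a base
point `i` of norm one a map of truncation posets multiplies norms by `νT (f i)`. Hence, for
`i ≤ z`, `t ≤ f z` says exactly that `νS z` is a multiple of `m = νT t / gcd (νT t) (νT (f i))`.
So below every `x` with `t ≤ f x` the element of norm `m` is the unique minimal one, and every
element of `f^{-hat}(t)` in the component of `i` has norm `m`, so there is at most one such
element per component. The N-map condition supplies an element over `t'` in the component of
`s ∈ f^{-hat}(t)`; the element of `f^{-hat}(t')` below it lies above `s` by this uniqueness.
-/

theorem Nat.dvd_mul_iff_div_gcd_dvd {a b c : ℕ} (ha : 0 < a) : a ∣ b * c ↔ a / a.gcd b ∣ c := by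
  obtain ⟨g, a', b', hg, hco, rfl, rfl⟩ := Nat.exists_coprime' (Nat.gcd_pos_of_pos_left b ha)
  rw [Nat.gcd_mul_right, hco, one_mul, Nat.mul_div_cancel _ hg, mul_comm b', mul_assoc,
    mul_comm a', Nat.mul_dvd_mul_iff_left hg, hco.dvd_mul_left]

namespace TP

section Norm

variable {S : Type*} [PartialOrder S] {ν : S → ℕ}

theorem IsTPNorm.exists_le_norm_eq_s9 (hν : IsTPNorm ν) {s : S} {n : ℕ} (hn : n ∣ ν s) :
    ∃ t ≤ s, ν t = n := by
  obtain ⟨t, ⟨hts, ht⟩, -⟩ := hν.2.2.2.1 s (ν s / n) (Nat.div_dvd_of_dvd hn)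
  exact ⟨t, hts, ht.trans (Nat.div_div_self hn (hν.1 s).ne')⟩

theorem IsTPNorm.exists_le_norm_eq_one (hν : IsTPNorm ν) (s : S) : ∃ i ≤ s, ν i = 1 :=
  hν.exists_le_norm_eq_s9 (one_dvd _)

theorem IsTPNorm.eq_of_le_of_norm_eq_s9 (hν : IsTPNorm ν) {x y z : S} (hx : x ≤ z) (hy : y ≤ z)
    (h : ν x = ν y) : x = y := by
  have hxz : ν x ∣ ν z := hν.2.1 x z hx
  have hz : ν z / (ν z / ν x) = ν x := Nat.div_div_self hxz (hν.1 z).ne'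
  obtain ⟨_, -, huniq⟩ := hν.2.2.2.1 z (ν z / ν x) (Nat.div_dvd_of_dvd hxz)
  exact (huniq x ⟨hx, hz.symm⟩).trans (huniq y ⟨hy, h ▸ hz.symm⟩).symm

theorem IsTPNorm.le_iff_dvd (hν : IsTPNorm ν) {x y z : S} (hx : x ≤ z) (hy : y ≤ z) :
    x ≤ y ↔ ν x ∣ ν y := by
  refine ⟨hν.2.1 x y, fun h => ?_⟩
  obtain ⟨w, hwy, hw⟩ := hν.exists_le_norm_eq_s9 h
  exact hν.eq_of_le_of_norm_eq_s9 hx (hwy.trans hy) hw.symm ▸ hwy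

theorem IsTPNorm.le_of_norm_eq_one (hν : IsTPNorm ν) {i x z : S} (hi : ν i = 1) (hiz : i ≤ z)
    (hxz : x ≤ z) : i ≤ x :=
  (hν.le_iff_dvd hiz hxz).2 (hi ▸ one_dvd _)

theorem IsTPNorm.sameComp_of_le (hν : IsTPNorm ν) {x a b : S} (ha : x ≤ a) (hb : x ≤ b) :
    SameComp ν a b :=
  let ⟨i, hix, hi⟩ := hν.exists_le_norm_eq_one x
  ⟨i, hi, hix.trans ha, hix.trans hb⟩

theorem SameComp.of_le_right (hν : IsTPNorm ν) {a b c : S} (h : SameComp ν a b) (hcb : c ≤ b) :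
    SameComp ν a c :=
  let ⟨i, hi, hia, hib⟩ := h
  ⟨i, hi, hia, hν.le_of_norm_eq_one hi hib hcb⟩

end Norm

section Map

variable {S T : Type*} [PartialOrder S] [PartialOrder T] {νS : S → ℕ} {νT : T → ℕ} {f : S → T}

theorem IsTPMap.norm_map_eq_mul_s9 (hT : IsTPNorm νT) (hf : IsTPMap νS νT f) {i z : S}
    (hi : νS i = 1) (hiz : i ≤ z) : νT (f z) = νT (f i) * νS z := by
  obtain ⟨hle, hratio⟩ := hf i z hiz
  rw [hi, Nat.div_one] at hratio
  rw [← hratio, Nat.mul_div_cancel' (hT.2.1 _ _ hle)]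

theorem le_map_iff_div_gcd_dvd (hT : IsTPNorm νT) (hf : IsTPMap νS νT f) {i z x : S} {t : T}
    (hi : νS i = 1) (hiz : i ≤ z) (hzx : z ≤ x) (htx : t ≤ f x) :
    t ≤ f z ↔ νT t / (νT t).gcd (νT (f i)) ∣ νS z := by
  rw [hT.le_iff_dvd htx (hf z x hzx).1, hf.norm_map_eq_mul_s9 hT hi hiz,
    Nat.dvd_mul_iff_div_gcd_dvd (hT.1 t)]

theorem norm_eq_of_mem_hatPreim (hS : IsTPNorm νS) (hT : IsTPNorm νT) (hf : IsTPMap νS νT f)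
    {i s : S} {t : T} (hi : νS i = 1) (his : i ≤ s)
    (hs : s ∈ hatPreim f t) : νS s = νT t / (νT t).gcd (νT (f i)) := by
  have hdvd := (le_map_iff_div_gcd_dvd hT hf hi his le_rfl hs.1).1 hs.1
  obtain ⟨u, hus, hu⟩ := hS.exists_le_norm_eq_s9 hdvd
  have hiu : i ≤ u := hS.le_of_norm_eq_one hi his hus
  have htu : t ≤ f u := (le_map_iff_div_gcd_dvd hT hf hi hiu hus hs.1).2 (hu ▸ dvd_rfl)
  rw [← hs.2 u hus htu, hu]

theorem eq_of_sameComp_of_mem_hatPreim (hS : IsTPNorm νS) (hT : IsTPNorm νT)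
    (hf : IsTPMap νS νT f) {s s₀ : S} {t : T} (h : SameComp νS s s₀)
    (hs : s ∈ hatPreim f t) (hs₀ : s₀ ∈ hatPreim f t) : s = s₀ :=
  let ⟨i, hi, his, his₀⟩ := h
  hS.2.2.2.2 i s s₀ his his₀ <| (norm_eq_of_mem_hatPreim hS hT hf hi his hs).trans
    (norm_eq_of_mem_hatPreim hS hT hf hi his₀ hs₀).symm

theorem existsUnique_mem_hatPreim_le (hS : IsTPNorm νS) (hT : IsTPNorm νT)
    (hf : IsTPMap νS νT f) {t : T} {x : S} (htx : t ≤ f x) :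
    ∃! s, s ∈ hatPreim f t ∧ s ≤ x := by
  obtain ⟨i, hix, hi⟩ := hS.exists_le_norm_eq_one x
  have hdvd := (le_map_iff_div_gcd_dvd hT hf hi hix le_rfl htx).1 htx
  obtain ⟨u, hux, hu⟩ := hS.exists_le_norm_eq_s9 hdvd
  have hleast : ∀ v ≤ x, t ≤ f v → u ≤ v := fun v hvx htv =>
    (hS.le_iff_dvd hux hvx).2 <| hu ▸
      (le_map_iff_div_gcd_dvd hT hf hi (hS.le_of_norm_eq_one hi hix hvx) hvx htx).1 htv
  have htu : t ≤ f u := (le_map_iff_div_gcd_dvd hT hf hi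
    (hS.le_of_norm_eq_one hi hix hux) hux htx).2 (hu ▸ dvd_rfl)
  refine ⟨u, ⟨⟨htu, fun v hvu htv => le_antisymm hvu (hleast v (hvu.trans hux) htv)⟩, hux⟩, ?_⟩
  rintro s ⟨hs, hsx⟩
  exact (hs.2 u (hleast s hsx hs.1) htu).symm

end Map

end TP

/-- Divisibility structure of generalized preimages: for an N-map `f : S → T` and
`t ≤ t'`, every `s ∈ f^{-hat}(t)` divides a unique `s' ∈ f^{-hat}(t')`, and every
`s' ∈ f^{-hat}(t')` is divisible by a unique `s ∈ f^{-hat}(t)`. -/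
theorem stmt9 {S T : Type*} [PartialOrder S] [PartialOrder T]
    (νS : S → ℕ) (νT : T → ℕ) (hS : TP.IsTPNorm νS) (hT : TP.IsTPNorm νT)
    (f : S → T) (hf : TP.IsNMap νS νT f) :
    ∀ t t' : T, t ≤ t' →
      (∀ s ∈ TP.hatPreim f t, ∃! s' : S, s' ∈ TP.hatPreim f t' ∧ s ≤ s') ∧
      (∀ s' ∈ TP.hatPreim f t', ∃! s : S, s ∈ TP.hatPreim f t ∧ s ≤ s') := by
  obtain ⟨hmap, hcomp, -⟩ := hf
  intro t t' htt'
  refine ⟨fun s hs => ?_, fun s' hs' =>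
    TP.existsUnique_mem_hatPreim_le hS hT hmap (htt'.trans hs'.1)⟩
  obtain ⟨s₁, hss₁, ht's₁⟩ := hcomp s t' (hT.sameComp_of_le hs.1 htt')
  obtain ⟨s', ⟨hs', hs's₁⟩, -⟩ := TP.existsUnique_mem_hatPreim_le hS hT hmap ht's₁
  obtain ⟨s₀, ⟨hs₀, hs₀s'⟩, -⟩ :=
    TP.existsUnique_mem_hatPreim_le hS hT hmap (htt'.trans hs'.1)
  have hss' : s ≤ s' := by
    rwa [TP.eq_of_sameComp_of_mem_hatPreim hS hT hmap
      (hss₁.of_le_right hS (hs₀s'.trans hs's₁)) hs hs₀]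
  refine ⟨s', ⟨hs', hss'⟩, fun y ⟨hy, hsy⟩ => ?_⟩
  exact TP.eq_of_sameComp_of_mem_hatPreim hS hT hmap (hS.sameComp_of_le hsy hss') hy hs'
end

section
/- The additive pullback is a truncation poset with the expected legs: given a T-map f : S → A and an R-map g : T → A of truncation posets, the set f*_⊕T = { (s,t,ξ) : f(s) = g(t), ξ ∈ C_m } with m = gcd(|f(s)|/|s|, |g(t)|/|t|), norm |(s,t,ξ)| = gcd(|s|,|t|), and order (s₁,t₁,ξ₁) | (s₂,t₂,ξ₂) iff s₁|s₂, t₁|t₂ and ξ₁ = ξ₂ (under the canonical identification of the cyclic groups), is a truncation poset; the projection g' : f*_⊕T → S, (s,t,ξ) ↦ s is an R-map; and the projection f' : f*_⊕T → T, (s,t,ξ) ↦ t is a T-map. -/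
/-- The additive pullback of a T-map `f : S → A` along an R-map `g : T → A`:
triples `(s, t, ξ)` with `f s = g t` and `ξ ∈ C_m`, `m = gcd(|f s|/|s|, |g t|/|t|)`. -/
def AddPB {S T A : Type*} [PartialOrder S] [PartialOrder T] [PartialOrder A]
    (νS : S → ℕ) (νT : T → ℕ) (νA : A → ℕ) (f : S → A) (g : T → A) : Type _ :=
  {p : S × T × ℕ // f p.1 = g p.2.1 ∧
    p.2.2 < Nat.gcd (νA (f p.1) / νS p.1) (νA (g p.2.1) / νT p.2.1)}

instance {S T A : Type*} [PartialOrder S] [PartialOrder T] [PartialOrder A]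
    (νS : S → ℕ) (νT : T → ℕ) (νA : A → ℕ) (f : S → A) (g : T → A) :
    PartialOrder (AddPB νS νT νA f g) where
  le p q := p.1.1 ≤ q.1.1 ∧ p.1.2.1 ≤ q.1.2.1 ∧ p.1.2.2 = q.1.2.2
  le_refl p := ⟨le_refl _, le_refl _, rfl⟩
  le_trans p q r h h' := ⟨h.1.trans h'.1, h.2.1.trans h'.2.1, h.2.2.trans h'.2.2⟩
  le_antisymm p q h h' := by
    apply Subtype.ext
    exact Prod.ext (le_antisymm h.1 h'.1) (Prod.ext (le_antisymm h.2.1 h'.2.1) h.2.2)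

namespace TP

section Norm

variable {S : Type*} [PartialOrder S] {ν : S → ℕ}

theorem IsTPNorm.pos (hν : IsTPNorm ν) (s : S) : 0 < ν s := hν.1 s

theorem IsTPNorm.dvd_of_le (hν : IsTPNorm ν) {s t : S} (h : s ≤ t) : ν s ∣ ν t :=
  hν.2.1 s t h

theorem IsTPNorm.existsUnique_le (hν : IsTPNorm ν) {s : S} {d : ℕ} (hd : d ∣ ν s) :
    ∃! t, t ≤ s ∧ ν t = ν s / d :=
  hν.2.2.2.1 s d hd

theorem IsTPNorm.eq_of_ge_of_norm_eq (hν : IsTPNorm ν) {s t t' : S} (ht : s ≤ t)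
    (ht' : s ≤ t') (h : ν t = ν t') : t = t' :=
  hν.2.2.2.2 s t t' ht ht' h

theorem IsTPNorm.eq_of_le_of_norm_eq_s14 (hν : IsTPNorm ν) {s t t' : S} (ht : t ≤ s)
    (ht' : t' ≤ s) (h : ν t = ν t') : t = t' := by
  have hd : ν s / ν t ∣ ν s := Nat.div_dvd_of_dvd (hν.dvd_of_le ht)
  have hνt : ν t = ν s / (ν s / ν t) :=
    (Nat.div_div_self (hν.dvd_of_le ht) (hν.pos s).ne').symm
  exact (hν.existsUnique_le hd).unique ⟨ht, hνt⟩ ⟨ht', h ▸ hνt⟩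

end Norm

section Map

variable {S A : Type*} [PartialOrder S] [PartialOrder A] {νS : S → ℕ} {νA : A → ℕ}
  {φ : S → A}

theorem IsTPMap.monotone_s14 (hφ : IsTPMap νS νA φ) : Monotone φ :=
  fun _ _ h => (hφ _ _ h).1

theorem IsTPMap.norm_map_div (hφ : IsTPMap νS νA φ) {s₁ s₂ : S} (h : s₁ ≤ s₂) :
    νA (φ s₂) / νA (φ s₁) = νS s₂ / νS s₁ :=
  (hφ _ _ h).2

theorem IsTPMap.norm_map_eq_mul_s14 (hA : IsTPNorm νA) (hφ : IsTPMap νS νA φ) {s₁ s₂ : S}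
    (h : s₁ ≤ s₂) : νA (φ s₂) = νS s₂ / νS s₁ * νA (φ s₁) := by
  rw [← hφ.norm_map_div h, Nat.div_mul_cancel (hA.dvd_of_le (hφ.monotone_s14 h))]

theorem IsTPMap.norm_map_div_norm_eq (hS : IsTPNorm νS) (hA : IsTPNorm νA)
    (hφ : IsTPMap νS νA φ) {s₁ s₂ : S} (h : s₁ ≤ s₂) :
    νA (φ s₂) / νS s₂ = νA (φ s₁) / νS s₁ := by
  obtain ⟨r, hr⟩ := hS.dvd_of_le h
  have hr0 : 0 < r := Nat.pos_of_mul_pos_left (hr ▸ hS.pos s₂)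
  rw [hφ.norm_map_eq_mul_s14 hA h, hr, Nat.mul_div_cancel_left _ (hS.pos s₁), mul_comm (νS s₁),
    Nat.mul_div_mul_left _ _ hr0]

theorem IsTPMap.norm_map_eq_div (hS : IsTPNorm νS) (hA : IsTPNorm νA) (hφ : IsTPMap νS νA φ)
    {s s' : S} {d : ℕ} (hs' : s' ≤ s) (hd : d ∣ νS s) (hνs' : νS s' = νS s / d) :
    νA (φ s') = νA (φ s) / d := by
  have hd0 : 0 < d := Nat.pos_of_dvd_of_pos hd (hS.pos s)
  rw [hφ.norm_map_eq_mul_s14 hA hs', hνs', Nat.div_div_self hd (hS.pos s).ne',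
    Nat.mul_div_cancel_left _ hd0]

end Map

end TP

theorem Nat.gcd_le_of_le {a b n : ℕ} (ha : a ≤ n) (hb : b ≤ n) : Nat.gcd a b ≤ n := by
  rcases Nat.eq_zero_or_pos a with rfl | ha0
  · rwa [Nat.gcd_zero_left]
  · exact (Nat.gcd_le_left b ha0).trans ha

namespace AddPB

variable {S T A : Type*} [PartialOrder S] [PartialOrder T] [PartialOrder A]
  {νS : S → ℕ} {νT : T → ℕ} {νA : A → ℕ} {f : S → A} {g : T → A}

def fst (p : AddPB νS νT νA f g) : S := p.1.1

def snd (p : AddPB νS νT νA f g) : T := p.1.2.1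

def ξ (p : AddPB νS νT νA f g) : ℕ := p.1.2.2

def norm (p : AddPB νS νT νA f g) : ℕ := Nat.gcd (νS p.fst) (νT p.snd)

theorem map_fst_eq (p : AddPB νS νT νA f g) : f p.fst = g p.snd := p.2.1

theorem ξ_lt (p : AddPB νS νT νA f g) :
    p.ξ < Nat.gcd (νA (f p.fst) / νS p.fst) (νA (g p.snd) / νT p.snd) :=
  p.2.2

theorem ext {p q : AddPB νS νT νA f g} (hfst : p.fst = q.fst) (hsnd : p.snd = q.snd)
    (hξ : p.ξ = q.ξ) : p = q :=
  Subtype.ext (Prod.ext hfst (Prod.ext hsnd hξ))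

theorem le_iff {p q : AddPB νS νT νA f g} :
    p ≤ q ↔ p.fst ≤ q.fst ∧ p.snd ≤ q.snd ∧ p.ξ = q.ξ :=
  Iff.rfl

theorem fst_le_fst {p q : AddPB νS νT νA f g} (h : p ≤ q) : p.fst ≤ q.fst := h.1

theorem snd_le_snd {p q : AddPB νS νT νA f g} (h : p ≤ q) : p.snd ≤ q.snd := h.2.1

theorem ξ_eq_of_le {p q : AddPB νS νT νA f g} (h : p ≤ q) : p.ξ = q.ξ := h.2.2

def withBase (p : AddPB νS νT νA f g) (s : S) (t : T) (hst : f s = g t)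
    (hs : νA (f s) / νS s = νA (f p.fst) / νS p.fst)
    (ht : νA (g t) / νT t = νA (g p.snd) / νT p.snd) : AddPB νS νT νA f g :=
  ⟨(s, t, p.ξ), hst, by simpa only [hs, ht] using p.ξ_lt⟩

theorem norm_pos (hS : TP.IsTPNorm νS) (p : AddPB νS νT νA f g) : 0 < p.norm :=
  Nat.gcd_pos_of_pos_left _ (hS.pos _)

theorem exists_common_scale (hS : TP.IsTPNorm νS) (hT : TP.IsTPNorm νT)
    (hf : TP.IsTPMap νS νA f) (hg : TP.IsTPMap νT νA g) {p q : AddPB νS νT νA f g} (h : p ≤ q) :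
    ∃ r, νS q.fst = νS p.fst * r ∧ νT q.snd = νT p.snd * r ∧ q.norm = p.norm * r := by
  obtain ⟨r, hfst⟩ := hS.dvd_of_le (fst_le_fst h)
  have hratio : νT q.snd / νT p.snd = r := by
    rw [← hg.norm_map_div (snd_le_snd h), ← p.map_fst_eq, ← q.map_fst_eq,
      hf.norm_map_div (fst_le_fst h), hfst, Nat.mul_div_cancel_left _ (hS.pos _)]
  have hsnd : νT q.snd = νT p.snd * r := by
    rw [← hratio, Nat.mul_div_cancel' (hT.dvd_of_le (snd_le_snd h))]
  exact ⟨r, hfst, hsnd, by rw [norm, norm, hfst, hsnd, Nat.gcd_mul_right]⟩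

theorem norm_dvd_norm (hS : TP.IsTPNorm νS) (hT : TP.IsTPNorm νT) (hf : TP.IsTPMap νS νA f)
    (hg : TP.IsTPMap νT νA g) {p q : AddPB νS νT νA f g} (h : p ≤ q) : p.norm ∣ q.norm := by
  obtain ⟨r, -, -, hnorm⟩ := exists_common_scale hS hT hf hg h
  exact ⟨r, hnorm⟩

theorem norm_div_norm_eq_fst (hS : TP.IsTPNorm νS) (hT : TP.IsTPNorm νT)
    (hf : TP.IsTPMap νS νA f) (hg : TP.IsTPMap νT νA g) {p q : AddPB νS νT νA f g}
    (h : p ≤ q) : q.norm / p.norm = νS q.fst / νS p.fst := by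
  obtain ⟨r, hfst, -, hnorm⟩ := exists_common_scale hS hT hf hg h
  rw [hfst, hnorm, Nat.mul_div_cancel_left _ (norm_pos hS p),
    Nat.mul_div_cancel_left _ (hS.pos _)]

theorem norm_div_norm_eq_snd (hS : TP.IsTPNorm νS) (hT : TP.IsTPNorm νT)
    (hf : TP.IsTPMap νS νA f) (hg : TP.IsTPMap νT νA g) {p q : AddPB νS νT νA f g}
    (h : p ≤ q) : q.norm / p.norm = νT q.snd / νT p.snd := by
  obtain ⟨r, -, hsnd, hnorm⟩ := exists_common_scale hS hT hf hg h
  rw [hsnd, hnorm, Nat.mul_div_cancel_left _ (norm_pos hS p),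
    Nat.mul_div_cancel_left _ (hT.pos _)]

theorem eq_of_ge_of_norm_eq (hS : TP.IsTPNorm νS) (hT : TP.IsTPNorm νT)
    (hf : TP.IsTPMap νS νA f) (hg : TP.IsTPMap νT νA g) {p q q' : AddPB νS νT νA f g}
    (hq : p ≤ q) (hq' : p ≤ q') (h : q.norm = q'.norm) : q = q' := by
  obtain ⟨r, hfst, hsnd, hnorm⟩ := exists_common_scale hS hT hf hg hq
  obtain ⟨r', hfst', hsnd', hnorm'⟩ := exists_common_scale hS hT hf hg hq'
  have hr : r = r' := Nat.eq_of_mul_eq_mul_left (norm_pos hS p) (hnorm ▸ hnorm' ▸ h)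
  subst hr
  refine ext (hS.eq_of_ge_of_norm_eq (fst_le_fst hq) (fst_le_fst hq') (hfst.trans hfst'.symm))
    (hT.eq_of_ge_of_norm_eq (snd_le_snd hq) (snd_le_snd hq') (hsnd.trans hsnd'.symm))
    ((ξ_eq_of_le hq).symm.trans (ξ_eq_of_le hq'))

theorem eq_of_le_of_norm_eq_s14 (hS : TP.IsTPNorm νS) (hT : TP.IsTPNorm νT)
    (hf : TP.IsTPMap νS νA f) (hg : TP.IsTPMap νT νA g) {p q q' : AddPB νS νT νA f g}
    (hq : q ≤ p) (hq' : q' ≤ p) (h : q.norm = q'.norm) : q = q' := by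
  obtain ⟨r, hfst, hsnd, hnorm⟩ := exists_common_scale hS hT hf hg hq
  obtain ⟨r', hfst', hsnd', hnorm'⟩ := exists_common_scale hS hT hf hg hq'
  have hr : r = r' := Nat.eq_of_mul_eq_mul_left (norm_pos hS q) (h ▸ hnorm.symm.trans hnorm')
  subst hr
  have hr0 : 0 < r := Nat.pos_of_mul_pos_left (hfst ▸ hS.pos p.fst)
  refine ext (hS.eq_of_le_of_norm_eq_s14 (fst_le_fst hq) (fst_le_fst hq')
      (Nat.eq_of_mul_eq_mul_right hr0 (hfst.symm.trans hfst')))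
    (hT.eq_of_le_of_norm_eq_s14 (snd_le_snd hq) (snd_le_snd hq')
      (Nat.eq_of_mul_eq_mul_right hr0 (hsnd.symm.trans hsnd')))
    ((ξ_eq_of_le hq).trans (ξ_eq_of_le hq').symm)

theorem exists_le_norm_eq_div (hS : TP.IsTPNorm νS) (hT : TP.IsTPNorm νT)
    (hA : TP.IsTPNorm νA) (hf : TP.IsTPMap νS νA f) (hg : TP.IsTPMap νT νA g)
    (p : AddPB νS νT νA f g) {d : ℕ} (hd : d ∣ p.norm) : ∃ q ≤ p, q.norm = p.norm / d := by
  have hdS : d ∣ νS p.fst := hd.trans (Nat.gcd_dvd_left _ _)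
  have hdT : d ∣ νT p.snd := hd.trans (Nat.gcd_dvd_right _ _)
  obtain ⟨s, ⟨hs, hνs⟩, -⟩ := hS.existsUnique_le hdS
  obtain ⟨t, ⟨ht, hνt⟩, -⟩ := hT.existsUnique_le hdT
  have hst : f s = g t := by
    refine hA.eq_of_le_of_norm_eq_s14 (hf.monotone_s14 hs) (p.map_fst_eq ▸ hg.monotone_s14 ht) ?_
    rw [hf.norm_map_eq_div hS hA hs hdS hνs, hg.norm_map_eq_div hT hA ht hdT hνt, p.map_fst_eq]
  refine ⟨p.withBase s t hst (hf.norm_map_div_norm_eq hS hA hs).symm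
    (hg.norm_map_div_norm_eq hT hA ht).symm, le_iff.2 ⟨hs, ht, rfl⟩, ?_⟩
  change Nat.gcd (νS s) (νT t) = p.norm / d
  rw [hνs, hνt, Nat.gcd_div hdS hdT, norm]

theorem isTPNorm_norm (hS : TP.IsTPNorm νS) (hT : TP.IsTPNorm νT) (hA : TP.IsTPNorm νA)
    (hf : TP.IsTPMap νS νA f) (hg : TP.IsTPMap νT νA g) :
    TP.IsTPNorm (norm : AddPB νS νT νA f g → ℕ) := by
  refine ⟨norm_pos hS, fun _ _ h => norm_dvd_norm hS hT hf hg h, ?_, ?_,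
    fun _ _ _ => eq_of_ge_of_norm_eq hS hT hf hg⟩
  · intro p q u hpq hqu
    exact (Nat.div_mul_div (norm_dvd_norm hS hT hf hg hqu) (norm_dvd_norm hS hT hf hg hpq)).symm
  · intro p d hd
    obtain ⟨q, hq, hνq⟩ := exists_le_norm_eq_div hS hT hA hf hg p hd
    exact ⟨q, ⟨hq, hνq⟩, fun q' ⟨hq', hνq'⟩ =>
      eq_of_le_of_norm_eq_s14 hS hT hf hg hq' hq (hνq'.trans hνq.symm)⟩

theorem isTPMap_fst (hS : TP.IsTPNorm νS) (hT : TP.IsTPNorm νT) (hf : TP.IsTPMap νS νA f)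
    (hg : TP.IsTPMap νT νA g) : TP.IsTPMap norm νS (fst : AddPB νS νT νA f g → S) :=
  fun _ _ h => ⟨fst_le_fst h, (norm_div_norm_eq_fst hS hT hf hg h).symm⟩

theorem isTPMap_snd (hS : TP.IsTPNorm νS) (hT : TP.IsTPNorm νT) (hf : TP.IsTPMap νS νA f)
    (hg : TP.IsTPMap νT νA g) : TP.IsTPMap norm νT (snd : AddPB νS νT νA f g → T) :=
  fun _ _ h => ⟨snd_le_snd h, (norm_div_norm_eq_snd hS hT hf hg h).symm⟩

theorem isFibration_snd (hS : TP.IsTPNorm νS) (hT : TP.IsTPNorm νT) (hA : TP.IsTPNorm νA)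
    (hf : TP.IsTMap νS νA f) (hg : TP.IsTPMap νT νA g) :
    TP.IsFibration (snd : AddPB νS νT νA f g → T) := by
  intro p t ht
  obtain ⟨s, hs, hst⟩ := hf.2.1 p.fst (g t) (p.map_fst_eq ▸ hg.monotone_s14 ht)
  exact ⟨p.withBase s t hst (hf.1.norm_map_div_norm_eq hS hA hs)
    (hg.norm_map_div_norm_eq hT hA ht), le_iff.2 ⟨hs, ht, rfl⟩, rfl⟩

theorem finite_preimage_snd (hf : TP.IsTMap νS νA f) (t : T) :
    ((snd : AddPB νS νT νA f g → T) ⁻¹' {t}).Finite := by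
  have hinj : Set.InjOn (fun p : AddPB νS νT νA f g => (p.fst, p.ξ)) (snd ⁻¹' {t}) :=
    fun p hp q hq hpq => ext (Prod.ext_iff.1 hpq).1 (hp.trans hq.symm) (Prod.ext_iff.1 hpq).2
  refine Set.Finite.of_finite_image (((hf.2.2 (g t)).prod (Set.finite_Iic (νA (g t)))).subset ?_)
    hinj
  rintro _ ⟨p, rfl : p.snd = t, rfl⟩
  refine ⟨p.map_fst_eq, p.ξ_lt.le.trans (Nat.gcd_le_of_le ?_ (Nat.div_le_self _ _))⟩
  exact p.map_fst_eq ▸ Nat.div_le_self _ _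

theorem isTMap_snd (hS : TP.IsTPNorm νS) (hT : TP.IsTPNorm νT) (hA : TP.IsTPNorm νA)
    (hf : TP.IsTMap νS νA f) (hg : TP.IsTPMap νT νA g) :
    TP.IsTMap norm νT (snd : AddPB νS νT νA f g → T) :=
  ⟨isTPMap_snd hS hT hf.1 hg, isFibration_snd hS hT hA hf hg, finite_preimage_snd hf⟩

end AddPB

/-- The additive pullback `f*_⊕T`, with norm `|(s,t,ξ)| = gcd(|s|,|t|)` and
componentwise order, is a truncation poset; the projection to `S` is an R-map and the
projection to `T` is a T-map. -/
theorem stmt14 {S T A : Type*} [PartialOrder S] [PartialOrder T] [PartialOrder A]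
    (νS : S → ℕ) (νT : T → ℕ) (νA : A → ℕ)
    (hS : TP.IsTPNorm νS) (hT : TP.IsTPNorm νT) (hA : TP.IsTPNorm νA)
    (f : S → A) (g : T → A) (hf : TP.IsTMap νS νA f) (hg : TP.IsTPMap νT νA g) :
    TP.IsTPNorm (fun p : AddPB νS νT νA f g => Nat.gcd (νS p.1.1) (νT p.1.2.1)) ∧
    TP.IsTPMap (fun p : AddPB νS νT νA f g => Nat.gcd (νS p.1.1) (νT p.1.2.1)) νS
      (fun p => p.1.1) ∧
    TP.IsTMap (fun p : AddPB νS νT νA f g => Nat.gcd (νS p.1.1) (νT p.1.2.1)) νT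
      (fun p => p.1.2.1) :=
  ⟨AddPB.isTPNorm_norm hS hT hA hf.1 hg, AddPB.isTPMap_fst hS hT hf.1 hg,
    AddPB.isTMap_snd hS hT hA hf hg⟩
end
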